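/- Let P be an NLP and P* an irreducible NLP such that P ↦*_UTPM P*. Then for every interpretation M, M is a partial stable model of P if and only if M is a partial stable model of P*. Consequently, M is a well-founded (respectively regular, stable, L-stable) model of P if and only if M is a well-founded (respectively regular, stable, L-stable) model of P*. -/
import Mathlib


/-- A rule of a normal logic program:
`head ← bodyPos, not bodyNeg`. -/
structure Rule (α : Type) where
  head : α
  bodyPos : Finset α
  bodyNeg : Finset α
deriving DecidableEq

/-- A normal logic program (NLP): a finite set of rules. -/
abbrev NLP (α : Type) := Finset (Rule α)

variable {α : Type} [DecidableEq α]

/-- The atoms occurring in a rule. -/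
def Rule.atoms (r : Rule α) : Finset α :=
  insert r.head (r.bodyPos ∪ r.bodyNeg)

/-- The Herbrand base of a program: all atoms occurring in it. -/
def HB (P : NLP α) : Finset α := P.sup Rule.atoms

/-- A three-valued interpretation, given by its sets of true and false atoms. -/
structure Interp (α : Type) where
  T : Set α
  F : Set α

/-- `I` is a 3-valued interpretation over the Herbrand base `H`. -/
def IsInterp (H : Finset α) (I : Interp α) : Prop :=
  I.T ⊆ ↑H ∧ I.F ⊆ ↑H ∧ Disjoint I.T I.F

/-- A rule of a positive program obtained as a reduct; `hasU` records whether
the special atom `u` (undefined in every interpretation) occurs in its body. -/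
structure PosRule (α : Type) where
  head : α
  bodyPos : Finset α
  hasU : Prop

/-- The reduct `P/I`: delete every rule whose negative body meets `I.T`,
delete each `not b` with `b ∈ I.F`, and replace the remaining negative
literals by the special atom `u`. -/
def reduct (P : NLP α) (I : Interp α) : Set (PosRule α) :=
  { q | ∃ r ∈ P, (∀ b ∈ r.bodyNeg, b ∉ I.T) ∧
        q.head = r.head ∧ q.bodyPos = r.bodyPos ∧
        (q.hasU ↔ ∃ b ∈ r.bodyNeg, b ∉ I.F) }

/-- The `Ψ` operator of a positive program `Q` relative to the Herbrand base
`H`; the special atom `u` is neither true nor false in any interpretation. -/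
def PsiOp (H : Finset α) (Q : Set (PosRule α)) (J : Interp α) : Interp α where
  T := { c | c ∈ H ∧ ∃ q ∈ Q, q.head = c ∧ ¬ q.hasU ∧ ∀ a ∈ q.bodyPos, a ∈ J.T }
  F := { c | c ∈ H ∧ ∀ q ∈ Q, q.head = c → ∃ a ∈ q.bodyPos, a ∈ J.F }

/-- Iteration of `Ψ` starting from `⟨∅, H⟩`. -/
def PsiIter (H : Finset α) (Q : Set (PosRule α)) : ℕ → Interp α
  | 0 => ⟨∅, ↑H⟩
  | n + 1 => PsiOp H Q (PsiIter H Q n)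

/-- `Ω_P(I)`: the least three-valued model of the reduct `P/I`,
obtained as the `ω`-iteration of `Ψ`. -/
def OmegaOp (H : Finset α) (P : NLP α) (I : Interp α) : Interp α where
  T := ⋃ n, (PsiIter H (reduct P I) n).T
  F := ⋂ n, (PsiIter H (reduct P I) n).F

/-- `I` is a partial stable model of `P` (over Herbrand base `H`). -/
def IsPSModel (H : Finset α) (P : NLP α) (I : Interp α) : Prop :=
  IsInterp H I ∧ OmegaOp H P I = I

/-- Well-founded model: a partial stable model with `⊆`-minimal true part. -/
def IsWFModel (H : Finset α) (P : NLP α) (I : Interp α) : Prop :=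
  IsPSModel H P I ∧ ∀ J, IsPSModel H P J → ¬ J.T ⊂ I.T

/-- Regular model: a partial stable model with `⊆`-maximal true part. -/
def IsRegularModel (H : Finset α) (P : NLP α) (I : Interp α) : Prop :=
  IsPSModel H P I ∧ ∀ J, IsPSModel H P J → ¬ I.T ⊂ J.T

/-- Stable model: a partial stable model with `T ∪ F = H`. -/
def IsStableModel (H : Finset α) (P : NLP α) (I : Interp α) : Prop :=
  IsPSModel H P I ∧ I.T ∪ I.F = ↑H

/-- L-stable model: a partial stable model with `⊆`-maximal `T ∪ F`. -/
def IsLStableModel (H : Finset α) (P : NLP α) (I : Interp α) : Prop :=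
  IsPSModel H P I ∧ ∀ J, IsPSModel H P J → ¬ (I.T ∪ I.F) ⊂ (J.T ∪ J.F)

/-- `IsStatement P c V R`: there is a statement of `P` with conclusion `c`,
vulnerabilities `V` and rules `R`.  A statement is built from a rule
`r = c ← a₁,…,a_m, not b₁,…,not b_n ∈ P` together with statements `sᵢ` for the
positive body atoms `aᵢ` (with `r` not among their rules); its vulnerabilities
are `Vul(s₁) ∪ … ∪ Vul(s_m) ∪ {b₁,…,b_n}` and its rules are
`Rules(s₁) ∪ … ∪ Rules(s_m) ∪ {r}`. -/
inductive IsStatement (P : NLP α) : α → Finset α → Finset (Rule α) → Prop where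
  | mk (r : Rule α) (hr : r ∈ P) (v : α → Finset α) (ρ : α → Finset (Rule α))
      (hsub : ∀ a ∈ r.bodyPos, IsStatement P a (v a) (ρ a))
      (hnr : ∀ a ∈ r.bodyPos, r ∉ ρ a) :
      IsStatement P r.head (r.bodyPos.biUnion v ∪ r.bodyNeg)
        (insert r (r.bodyPos.biUnion ρ))

/-- `c` is an argument of `P`: it is the conclusion of some statement. -/
def IsArg (P : NLP α) (c : α) : Prop := ∃ V R, IsStatement P c V R

open Classical in
/-- The set `A_P` of arguments of `P`. -/
noncomputable def argsOf (P : NLP α) : Finset α := (HB P).filter (IsArg P)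

/-- `B` meets every vulnerability set of `a` in `P`. -/
def HitsVul (P : NLP α) (B : Finset α) (a : α) : Prop :=
  ∀ V R, IsStatement P a V R → ∃ b ∈ B, b ∈ V

/-- A SETAF: a finite set of arguments and an attack relation between
finite sets of arguments and arguments. -/
structure SETAF (α : Type) where
  args : Finset α
  att : Finset α → α → Prop

/-- Well-formedness of a SETAF: attackers are nonempty sets of arguments
attacking arguments, and attacking sets are `⊆`-minimal. -/
def SETAF.Wf (S : SETAF α) : Prop :=
  (∀ B a, S.att B a → B.Nonempty ∧ B ⊆ S.args ∧ a ∈ S.args) ∧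
  (∀ B a, S.att B a → ∀ B', B' ⊂ B → ¬ S.att B' a)

/-- The SETAF `𝔄_P` associated with an NLP `P`: its arguments are the
conclusions of the statements of `P`, and `B` attacks `a` iff `B` is a
`⊆`-minimal set of arguments meeting every vulnerability set of `a`. -/
noncomputable def setafOf (P : NLP α) : SETAF α where
  args := argsOf P
  att := fun B a =>
    B ⊆ argsOf P ∧ a ∈ argsOf P ∧ HitsVul P B a ∧ ∀ B', B' ⊂ B → ¬ HitsVul P B' a

/-- Labels for arguments. -/
inductive Lab : Type
  | inn | out | und
deriving DecidableEq

/-- `in(L)`. -/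
def labIn (S : SETAF α) (L : α → Lab) : Set α := { a | a ∈ S.args ∧ L a = Lab.inn }

/-- `out(L)`. -/
def labOut (S : SETAF α) (L : α → Lab) : Set α := { a | a ∈ S.args ∧ L a = Lab.out }

/-- `undec(L)`. -/
def labUnd (S : SETAF α) (L : α → Lab) : Set α := { a | a ∈ S.args ∧ L a = Lab.und }

/-- Admissible labelling. -/
def AdmissibleLab (S : SETAF α) (L : α → Lab) : Prop :=
  ∀ a ∈ S.args,
    (L a = Lab.inn → ∀ B, S.att B a → ∃ b ∈ B, L b = Lab.out) ∧
    (L a = Lab.out → ∃ B, S.att B a ∧ ∀ b ∈ B, L b = Lab.inn)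

/-- Complete labelling. -/
def CompleteLab (S : SETAF α) (L : α → Lab) : Prop :=
  AdmissibleLab S L ∧
  ∀ a ∈ S.args, L a = Lab.und →
    (∃ B, S.att B a ∧ ∀ b ∈ B, L b ≠ Lab.out) ∧
    (∀ B, S.att B a → ∃ b ∈ B, L b ≠ Lab.inn)

/-- Grounded labelling: complete with `⊆`-minimal `in(L)`. -/
def GroundedLab (S : SETAF α) (L : α → Lab) : Prop :=
  CompleteLab S L ∧ ∀ L', CompleteLab S L' → ¬ labIn S L' ⊂ labIn S L

/-- Preferred labelling: complete with `⊆`-maximal `in(L)`. -/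
def PreferredLab (S : SETAF α) (L : α → Lab) : Prop :=
  CompleteLab S L ∧ ∀ L', CompleteLab S L' → ¬ labIn S L ⊂ labIn S L'

/-- Stable labelling: complete with `undec(L) = ∅`. -/
def StableLab (S : SETAF α) (L : α → Lab) : Prop :=
  CompleteLab S L ∧ labUnd S L = ∅

/-- Semi-stable labelling: complete with `⊆`-minimal `undec(L)`. -/
def SemiStableLab (S : SETAF α) (L : α → Lab) : Prop :=
  CompleteLab S L ∧ ∀ L', CompleteLab S L' → ¬ labUnd S L' ⊂ labUnd S L

/-- `L2I_P`: the interpretation associated with a labelling of `𝔄_P`. -/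
def L2I (P : NLP α) (L : α → Lab) : Interp α where
  T := { c | c ∈ HB P ∧ c ∈ argsOf P ∧ L c = Lab.inn }
  F := { c | c ∈ HB P ∧ (c ∉ argsOf P ∨ (c ∈ argsOf P ∧ L c = Lab.out)) }

open Classical in
/-- `I2L`: the labelling associated with an interpretation (meaningful on
the arguments). -/
noncomputable def I2L (I : Interp α) : α → Lab := fun c =>
  if c ∈ I.T then Lab.inn else if c ∈ I.F then Lab.out else Lab.und

/-- `L2I_𝔄`: the interpretation `⟨in(L), out(L)⟩` associated with a labelling
of a SETAF `𝔄`. -/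
def L2Iset (S : SETAF α) (L : α → Lab) : Interp α := ⟨labIn S L, labOut S L⟩

/-- `V` meets every attacker of `a` in `S`. -/
def HitsAtt (S : SETAF α) (a : α) (V : Finset α) : Prop :=
  ∀ B, S.att B a → ∃ b ∈ B, b ∈ V

/-- `V ∈ V_a`: a `⊆`-minimal set of arguments meeting every attacker of `a`. -/
def MemVa (S : SETAF α) (a : α) (V : Finset α) : Prop :=
  V ⊆ S.args ∧ HitsAtt S a V ∧ ∀ V', V' ⊂ V → ¬ HitsAtt S a V'

open Classical in
/-- The NLP `P_𝔄` associated with a SETAF `𝔄`: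
`{ a ← not b₁,…,not b_n | a ∈ A, {b₁,…,b_n} ∈ V_a }`. -/
noncomputable def nlpOf (S : SETAF α) : NLP α :=
  ((S.args ×ˢ S.args.powerset).filter (fun p => MemVa S p.1 p.2)).image
    (fun p => { head := p.1, bodyPos := ∅, bodyNeg := p.2 })

/-- Redundancy-Free Atomic Logic Program: every rule is atomic (no positive
body), every atom is a head, and no rule's negative body strictly contains
that of another rule with the same head. -/
def IsRFALP (P : NLP α) : Prop :=
  (∀ r ∈ P, r.bodyPos = ∅) ∧
  HB P = P.image Rule.head ∧
  ∀ r ∈ P, ∀ r' ∈ P, r'.head = r.head → ¬ r'.bodyNeg ⊂ r.bodyNeg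

/-- Unfolding: replace a rule `c ← a, a₁,…,a_m, not b₁,…,not b_n` by all rules
obtained by resolving `a` against the rules of the program with head `a`. -/
def StepU (P₁ P₂ : NLP α) : Prop :=
  ∃ r ∈ P₁, ∃ a ∈ r.bodyPos,
    P₂ = P₁.erase r ∪
      (P₁.filter (fun r' => r'.head = a)).image
        (fun r' => { head := r.head,
                     bodyPos := r'.bodyPos ∪ r.bodyPos.erase a,
                     bodyNeg := r'.bodyNeg ∪ r.bodyNeg })

/-- Elimination of tautologies: delete a rule whose head occurs in its
positive body. -/
def StepT (P₁ P₂ : NLP α) : Prop :=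
  ∃ r ∈ P₁, r.head ∈ r.bodyPos ∧ P₂ = P₁.erase r

/-- Positive reduction: delete a literal `not b` from the body of a rule,
where `b` is not the head of any rule of the program. -/
def StepP (P₁ P₂ : NLP α) : Prop :=
  ∃ r ∈ P₁, ∃ b ∈ r.bodyNeg, (∀ r' ∈ P₁, r'.head ≠ b) ∧
    P₂ = insert { head := r.head, bodyPos := r.bodyPos,
                  bodyNeg := r.bodyNeg.erase b } (P₁.erase r)

/-- Elimination of non-minimal rules: delete a rule subsumed by a distinct
rule with the same head and smaller bodies. -/
def StepM (P₁ P₂ : NLP α) : Prop :=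
  ∃ r ∈ P₁, ∃ r' ∈ P₁, r ≠ r' ∧ r'.head = r.head ∧
    r'.bodyPos ⊆ r.bodyPos ∧ r'.bodyNeg ⊆ r.bodyNeg ∧ P₂ = P₁.erase r

/-- `↦_UTPM`: the union of the four transformations. -/
def StepUTPM (P₁ P₂ : NLP α) : Prop :=
  StepU P₁ P₂ ∨ StepT P₁ P₂ ∨ StepP P₁ P₂ ∨ StepM P₁ P₂

/-- `P` is irreducible w.r.t. `↦_UTPM`: there is no `P' ≠ P` with
`P ↦_UTPM P'`. -/
def UTPMIrreducible (P : NLP α) : Prop :=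
  ¬ ∃ P', StepUTPM P P' ∧ P' ≠ P

section Aux
set_option linter.unusedSectionVars false

variable {α : Type} [DecidableEq α]

/-- The `T`-component operator of `PsiOp`. -/
def TOp (H : Finset α) (Q : Set (PosRule α)) (S : Set α) : Set α :=
  { c | c ∈ H ∧ ∃ q ∈ Q, q.head = c ∧ ¬ q.hasU ∧ ∀ a ∈ q.bodyPos, a ∈ S }

/-- The `F`-component operator of `PsiOp`. -/
def Fop (H : Finset α) (Q : Set (PosRule α)) (S : Set α) : Set α :=
  { c | c ∈ H ∧ ∀ q ∈ Q, q.head = c → ∃ a ∈ q.bodyPos, a ∈ S }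

/-- The union of the `T`-iterates. -/
def UT (H : Finset α) (Q : Set (PosRule α)) : Set α := ⋃ n, (PsiIter H Q n).T

/-- The intersection of the `F`-iterates. -/
def UF (H : Finset α) (Q : Set (PosRule α)) : Set α := ⋂ n, (PsiIter H Q n).F

lemma OmegaOp_eq (H : Finset α) (P : NLP α) (I : Interp α) :
    OmegaOp H P I = ⟨UT H (reduct P I), UF H (reduct P I)⟩ := rfl

lemma PsiIter_T_succ (H : Finset α) (Q : Set (PosRule α)) (n : ℕ) :
    (PsiIter H Q (n + 1)).T = TOp H Q (PsiIter H Q n).T := rfl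

lemma PsiIter_F_succ (H : Finset α) (Q : Set (PosRule α)) (n : ℕ) :
    (PsiIter H Q (n + 1)).F = Fop H Q (PsiIter H Q n).F := rfl

lemma TOp_mono {H : Finset α} {Q : Set (PosRule α)} {S S' : Set α} (h : S ⊆ S') :
    TOp H Q S ⊆ TOp H Q S' := by
  rintro c ⟨hc, q, hq, h1, h2, h3⟩
  exact ⟨hc, q, hq, h1, h2, fun a ha => h (h3 a ha)⟩

lemma Fop_mono {H : Finset α} {Q : Set (PosRule α)} {S S' : Set α} (h : S ⊆ S') :
    Fop H Q S ⊆ Fop H Q S' := by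
  rintro c ⟨hc, hall⟩
  exact ⟨hc, fun q hq hh => by obtain ⟨a, ha, haS⟩ := hall q hq hh; exact ⟨a, ha, h haS⟩⟩

lemma TOp_monoQ {H : Finset α} {Q Q' : Set (PosRule α)} {S : Set α} (h : Q ⊆ Q') :
    TOp H Q S ⊆ TOp H Q' S := by
  rintro c ⟨hc, q, hq, h1, h2, h3⟩
  exact ⟨hc, q, h hq, h1, h2, h3⟩

lemma Fop_antiQ {H : Finset α} {Q Q' : Set (PosRule α)} {S : Set α} (h : Q' ⊆ Q) :
    Fop H Q S ⊆ Fop H Q' S := by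
  rintro c ⟨hc, hall⟩
  exact ⟨hc, fun q hq hh => hall q (h hq) hh⟩

lemma T_mono (H : Finset α) (Q : Set (PosRule α)) :
    Monotone (fun n => (PsiIter H Q n).T) := by
  apply monotone_nat_of_le_succ
  intro n
  induction n with
  | zero => exact Set.empty_subset _
  | succ m ih => exact TOp_mono ih

lemma F_anti (H : Finset α) (Q : Set (PosRule α)) :
    Antitone (fun n => (PsiIter H Q n).F) := by
  apply antitone_nat_of_succ_le
  intro n
  induction n with
  | zero => exact fun c hc => hc.1
  | succ m ih => exact Fop_mono ih

lemma mem_UT {H : Finset α} {Q : Set (PosRule α)} {c : α} :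
    c ∈ UT H Q ↔ ∃ n, c ∈ (PsiIter H Q n).T := Set.mem_iUnion

lemma mem_UF {H : Finset α} {Q : Set (PosRule α)} {c : α} :
    c ∈ UF H Q ↔ ∀ n, c ∈ (PsiIter H Q n).F := Set.mem_iInter

lemma UT_closed {H : Finset α} {Q : Set (PosRule α)} :
    TOp H Q (UT H Q) ⊆ UT H Q := by
  rintro c ⟨hc, q, hq, h1, h2, h3⟩
  classical
  choose f hf using fun (a : α) (ha : a ∈ q.bodyPos) => mem_UT.1 (h3 a ha)
  set N := q.bodyPos.attach.sup (fun a => f a.1 a.2) with hN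
  refine mem_UT.2 ⟨N + 1, hc, q, hq, h1, h2, fun a ha => ?_⟩
  exact T_mono H Q (Finset.le_sup (f := fun a : {x // x ∈ q.bodyPos} => f a.1 a.2)
    (Finset.mem_attach _ ⟨a, ha⟩)) (hf a ha)

lemma UT_least {H : Finset α} {Q : Set (PosRule α)} {S : Set α}
    (h : TOp H Q S ⊆ S) : UT H Q ⊆ S := by
  have key : ∀ n, (PsiIter H Q n).T ⊆ S := by
    intro n
    induction n with
    | zero => intro c hc; exact hc.elim
    | succ m ih => exact fun c hc => h (TOp_mono ih hc)
  intro c hc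
  obtain ⟨n, hn⟩ := mem_UT.1 hc
  exact key n hn

lemma UF_pre {H : Finset α} {Q : Set (PosRule α)} :
    Fop H Q (UF H Q) ⊆ UF H Q := by
  intro c hc
  refine mem_UF.2 fun n => ?_
  cases n with
  | zero => exact hc.1
  | succ m => exact Fop_mono (fun x hx => mem_UF.1 hx m) hc

lemma UF_post {H : Finset α} {Q : Set (PosRule α)} :
    UF H Q ⊆ Fop H Q (UF H Q) := by
  classical
  intro c hc
  have hcH : c ∈ H := mem_UF.1 hc 0
  refine ⟨hcH, fun q hq hh => ?_⟩
  by_contra hcon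
  push_neg at hcon
  have key : ∀ a ∈ q.bodyPos, ∃ m, a ∉ (PsiIter H Q m).F := by
    intro a ha
    have := hcon a ha
    rw [mem_UF] at this
    push_neg at this
    exact this
  choose f hf using key
  set N := q.bodyPos.attach.sup (fun a => f a.1 a.2) with hN
  have hcN : c ∈ (PsiIter H Q (N + 1)).F := mem_UF.1 hc (N + 1)
  obtain ⟨a, ha, haF⟩ := hcN.2 q hq hh
  exact hf a ha (F_anti H Q (Finset.le_sup (f := fun a : {x // x ∈ q.bodyPos} => f a.1 a.2)
    (Finset.mem_attach _ ⟨a, ha⟩)) haF)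

lemma UF_greatest {H : Finset α} {Q : Set (PosRule α)} {S : Set α}
    (h : S ⊆ Fop H Q S) : S ⊆ UF H Q := by
  have key : ∀ n, S ⊆ (PsiIter H Q n).F := by
    intro n
    induction n with
    | zero => exact fun c hc => (h hc).1
    | succ m ih => exact fun c hc => Fop_mono ih (h hc)
  exact fun c hc => mem_UF.2 fun n => key n hc

lemma UT_eq_of {H : Finset α} {Q₁ Q₂ : Set (PosRule α)}
    (hA : TOp H Q₂ (UT H Q₁) ⊆ UT H Q₁) (hB : TOp H Q₁ (UT H Q₂) ⊆ UT H Q₂) :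
    UT H Q₁ = UT H Q₂ :=
  Set.Subset.antisymm (UT_least hB) (UT_least hA)

lemma UF_eq_of {H : Finset α} {Q₁ Q₂ : Set (PosRule α)}
    (hC : UF H Q₁ ⊆ Fop H Q₂ (UF H Q₁)) (hD : UF H Q₂ ⊆ Fop H Q₁ (UF H Q₂)) :
    UF H Q₁ = UF H Q₂ :=
  Set.Subset.antisymm (UF_greatest hC) (UF_greatest hD)

lemma mem_reduct_of {P : NLP α} {I : Interp α} {s : Rule α} (hs : s ∈ P)
    (hsurv : ∀ b ∈ s.bodyNeg, b ∉ I.T) :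
    (⟨s.head, s.bodyPos, ∃ b ∈ s.bodyNeg, b ∉ I.F⟩ : PosRule α) ∈ reduct P I :=
  ⟨s, hs, hsurv, rfl, rfl, Iff.rfl⟩

lemma reduct_monoP {P₁ P₂ : NLP α} {I : Interp α} (h : P₁ ⊆ P₂) :
    reduct P₁ I ⊆ reduct P₂ I := by
  rintro q ⟨s, hs, hrest⟩
  exact ⟨s, h hs, hrest⟩

lemma head_mem_HB {P : NLP α} {s : Rule α} (hs : s ∈ P) : s.head ∈ HB P :=
  Finset.le_sup (f := Rule.atoms) hs (Finset.mem_insert_self _ _)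

lemma bodyPos_mem_HB {P : NLP α} {s : Rule α} (hs : s ∈ P) {a : α}
    (ha : a ∈ s.bodyPos) : a ∈ HB P :=
  Finset.le_sup (f := Rule.atoms) hs
    (Finset.mem_insert_of_mem (Finset.mem_union_left _ ha))

lemma bodyNeg_mem_HB {P : NLP α} {s : Rule α} (hs : s ∈ P) {b : α}
    (hb : b ∈ s.bodyNeg) : b ∈ HB P :=
  Finset.le_sup (f := Rule.atoms) hs
    (Finset.mem_insert_of_mem (Finset.mem_union_right _ hb))

end Aux
section Aux2
set_option linter.unusedSectionVars false
set_option maxHeartbeats 1000000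

variable {α : Type} [DecidableEq α]

lemma mem_HB {P : NLP α} {x : α} : x ∈ HB P ↔ ∃ s ∈ P, x ∈ s.atoms := by
  simp [HB, Finset.mem_sup]

lemma HB_mono {P₂ P₁ : NLP α} (h : P₂ ⊆ P₁) : HB P₂ ⊆ HB P₁ := by
  intro x hx
  obtain ⟨s, hs, hxs⟩ := mem_HB.1 hx
  exact mem_HB.2 ⟨s, h hs, hxs⟩

lemma not_head_mem_OmegaF {P : NLP α} {H : Finset α} {I : Interp α} {b : α}
    (hbH : b ∈ H) (hno : ∀ s ∈ P, s.head ≠ b) : b ∈ (OmegaOp H P I).F := by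
  show b ∈ UF H (reduct P I)
  refine mem_UF.2 fun n => ?_
  cases n with
  | zero => exact hbH
  | succ m =>
      refine ⟨hbH, ?_⟩
      rintro q ⟨s, hs, -, hqh, -, -⟩ hqhead
      exact absurd (hqh.symm.trans hqhead) (hno s hs)

/-! ### Elimination of non-minimal rules -/

lemma stepM_omega {P₁ P₂ : NLP α} (h : StepM P₁ P₂) (H : Finset α) (I : Interp α) :
    OmegaOp H P₁ I = OmegaOp H P₂ I := by
  obtain ⟨r, hr, r', hr', hne, hh, hpos, hneg, hP₂⟩ := h
  have hr'P₂ : r' ∈ P₂ := by rw [hP₂]; exact Finset.mem_erase.2 ⟨Ne.symm hne, hr'⟩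
  have hsub : P₂ ⊆ P₁ := by rw [hP₂]; exact Finset.erase_subset _ _
  have hQ : reduct P₂ I ⊆ reduct P₁ I := reduct_monoP hsub
  have hA : TOp H (reduct P₂ I) (UT H (reduct P₁ I)) ⊆ UT H (reduct P₁ I) :=
    fun c hc => UT_closed (TOp_monoQ hQ hc)
  have hB : TOp H (reduct P₁ I) (UT H (reduct P₂ I)) ⊆ UT H (reduct P₂ I) := by
    rintro c ⟨hcH, q, ⟨s, hs, hsurv, hqh, hqb, hqu⟩, hqhead, hnu, hbody⟩
    by_cases hsr : s = r
    · subst hsr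
      have hsurv' : ∀ b ∈ r'.bodyNeg, b ∉ I.T := fun b hb => hsurv b (hneg hb)
      refine UT_closed ⟨hcH, _, mem_reduct_of hr'P₂ hsurv', ?_, ?_, ?_⟩
      · show r'.head = c
        rw [hh, ← hqh, hqhead]
      · rintro ⟨b, hb, hbF⟩
        exact hnu (hqu.2 ⟨b, hneg hb, hbF⟩)
      · intro x hx
        exact hbody x (by rw [hqb]; exact hpos hx)
    · exact UT_closed ⟨hcH, q,
        ⟨s, by rw [hP₂]; exact Finset.mem_erase.2 ⟨hsr, hs⟩, hsurv, hqh, hqb, hqu⟩,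
        hqhead, hnu, hbody⟩
  have hC : UF H (reduct P₁ I) ⊆ Fop H (reduct P₂ I) (UF H (reduct P₁ I)) :=
    fun c hc => Fop_antiQ hQ (UF_post hc)
  have hD : UF H (reduct P₂ I) ⊆ Fop H (reduct P₁ I) (UF H (reduct P₂ I)) := by
    intro c hc
    have hc2 := UF_post hc
    refine ⟨hc2.1, ?_⟩
    rintro q ⟨s, hs, hsurv, hqh, hqb, hqu⟩ hqhead
    by_cases hsr : s = r
    · subst hsr
      have hsurv' : ∀ b ∈ r'.bodyNeg, b ∉ I.T := fun b hb => hsurv b (hneg hb)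
      obtain ⟨x, hx, hxUF⟩ := hc2.2 _ (mem_reduct_of hr'P₂ hsurv')
        (by show r'.head = c; rw [hh, ← hqh, hqhead])
      exact ⟨x, by rw [hqb]; exact hpos hx, hxUF⟩
    · exact hc2.2 q
        ⟨s, by rw [hP₂]; exact Finset.mem_erase.2 ⟨hsr, hs⟩, hsurv, hqh, hqb, hqu⟩ hqhead
  rw [OmegaOp_eq, OmegaOp_eq, UT_eq_of hA hB, UF_eq_of hC hD]

/-! ### Elimination of tautologies -/

lemma stepT_omega {P₁ P₂ : NLP α} (h : StepT P₁ P₂) (H : Finset α) (I : Interp α) :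
    OmegaOp H P₁ I = OmegaOp H P₂ I := by
  obtain ⟨r, hr, htaut, hP₂⟩ := h
  have hsub : P₂ ⊆ P₁ := by rw [hP₂]; exact Finset.erase_subset _ _
  have hQ : reduct P₂ I ⊆ reduct P₁ I := reduct_monoP hsub
  have hA : TOp H (reduct P₂ I) (UT H (reduct P₁ I)) ⊆ UT H (reduct P₁ I) :=
    fun c hc => UT_closed (TOp_monoQ hQ hc)
  have hB : TOp H (reduct P₁ I) (UT H (reduct P₂ I)) ⊆ UT H (reduct P₂ I) := by
    rintro c ⟨hcH, q, ⟨s, hs, hsurv, hqh, hqb, hqu⟩, hqhead, hnu, hbody⟩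
    by_cases hsr : s = r
    · have hmem : s.head ∈ UT H (reduct P₂ I) :=
        hbody s.head (by rw [hqb, hsr]; exact htaut)
      have hch : c = s.head := by rw [← hqhead, hqh]
      rwa [hch]
    · exact UT_closed ⟨hcH, q,
        ⟨s, by rw [hP₂]; exact Finset.mem_erase.2 ⟨hsr, hs⟩, hsurv, hqh, hqb, hqu⟩,
        hqhead, hnu, hbody⟩
  have hC : UF H (reduct P₁ I) ⊆ Fop H (reduct P₂ I) (UF H (reduct P₁ I)) :=
    fun c hc => Fop_antiQ hQ (UF_post hc)
  have hD : UF H (reduct P₂ I) ⊆ Fop H (reduct P₁ I) (UF H (reduct P₂ I)) := by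
    intro c hc
    have hc2 := UF_post hc
    refine ⟨hc2.1, ?_⟩
    rintro q ⟨s, hs, hsurv, hqh, hqb, hqu⟩ hqhead
    by_cases hsr : s = r
    · refine ⟨s.head, by rw [hqb, hsr]; exact htaut, ?_⟩
      have hch : c = s.head := by rw [← hqhead, hqh]
      rwa [← hch]
    · exact hc2.2 q
        ⟨s, by rw [hP₂]; exact Finset.mem_erase.2 ⟨hsr, hs⟩, hsurv, hqh, hqb, hqu⟩ hqhead
  rw [OmegaOp_eq, OmegaOp_eq, UT_eq_of hA hB, UF_eq_of hC hD]

end Aux2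
section Aux3
set_option linter.unusedSectionVars false
set_option maxHeartbeats 1000000

variable {α : Type} [DecidableEq α]

lemma stepP_iff {P₁ P₂ : NLP α} {H : Finset α} {I : Interp α} (h : StepP P₁ P₂)
    (hH : HB P₁ ⊆ H) (hI : IsInterp H I) :
    OmegaOp H P₁ I = I ↔ OmegaOp H P₂ I = I := by
  classical
  obtain ⟨r, hr, b, hb, hnohead, hP₂⟩ := h
  have hbH : b ∈ H := hH (bodyNeg_mem_HB hr hb)
  have hred : b ∈ I.F → b ∉ I.T → reduct P₁ I = reduct P₂ I := by
    intro hbF hbT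
    ext q
    constructor
    · rintro ⟨s, hs, hsurv, h1, h2, h3⟩
      by_cases hsr : s = r
      · subst hsr
        refine ⟨{ head := s.head, bodyPos := s.bodyPos, bodyNeg := s.bodyNeg.erase b },
          by rw [hP₂]; exact Finset.mem_insert_self _ _,
          fun x hx => hsurv x (Finset.mem_of_mem_erase hx), h1, h2, ?_⟩
        refine h3.trans ⟨?_, ?_⟩
        · rintro ⟨x, hx, hxF⟩
          refine ⟨x, Finset.mem_erase.2 ⟨?_, hx⟩, hxF⟩
          rintro rfl; exact hxF hbF
        · rintro ⟨x, hx, hxF⟩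
          exact ⟨x, Finset.mem_of_mem_erase hx, hxF⟩
      · exact ⟨s, by rw [hP₂]; exact Finset.mem_insert_of_mem (Finset.mem_erase.2 ⟨hsr, hs⟩),
          hsurv, h1, h2, h3⟩
    · rintro ⟨s, hs, hsurv, h1, h2, h3⟩
      rw [hP₂] at hs
      rcases Finset.mem_insert.1 hs with rfl | hs
      · refine ⟨r, hr, ?_, h1, h2, ?_⟩
        · intro x hx
          by_cases hxb : x = b
          · rwa [hxb]
          · exact hsurv x (Finset.mem_erase.2 ⟨hxb, hx⟩)
        · refine h3.trans ⟨?_, ?_⟩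
          · rintro ⟨x, hx, hxF⟩
            exact ⟨x, Finset.mem_of_mem_erase hx, hxF⟩
          · rintro ⟨x, hx, hxF⟩
            refine ⟨x, Finset.mem_erase.2 ⟨?_, hx⟩, hxF⟩
            rintro rfl; exact hxF hbF
      · exact ⟨s, Finset.mem_of_mem_erase hs, hsurv, h1, h2, h3⟩
  constructor
  · intro hfix
    have hbF : b ∈ I.F := by
      have := not_head_mem_OmegaF (P := P₁) (I := I) hbH hnohead
      rwa [hfix] at this
    have hbT : b ∉ I.T := fun hT => Set.disjoint_left.1 hI.2.2 hT hbF
    calc OmegaOp H P₂ I = OmegaOp H P₁ I := by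
          rw [OmegaOp_eq, OmegaOp_eq, hred hbF hbT]
      _ = I := hfix
  · intro hfix
    have hno₂ : ∀ s ∈ P₂, s.head ≠ b := by
      intro s hs
      rw [hP₂] at hs
      rcases Finset.mem_insert.1 hs with rfl | hs
      · exact hnohead r hr
      · exact hnohead s (Finset.mem_of_mem_erase hs)
    have hbF : b ∈ I.F := by
      have := not_head_mem_OmegaF (P := P₂) (I := I) hbH hno₂
      rwa [hfix] at this
    have hbT : b ∉ I.T := fun hT => Set.disjoint_left.1 hI.2.2 hT hbF
    calc OmegaOp H P₁ I = OmegaOp H P₂ I := by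
          rw [OmegaOp_eq, OmegaOp_eq, hred hbF hbT]
      _ = I := hfix

end Aux3
section Aux4
set_option linter.unusedSectionVars false
set_option maxHeartbeats 1000000

variable {α : Type} [DecidableEq α]

lemma stepU_omega {P₁ P₂ : NLP α} {H : Finset α} (h : StepU P₁ P₂) (hH : HB P₁ ⊆ H)
    (I : Interp α) : OmegaOp H P₁ I = OmegaOp H P₂ I := by
  classical
  obtain ⟨r, hr, a, ha, hP₂⟩ := h
  have hresmem : ∀ r' ∈ P₁, r'.head = a →
      ({ head := r.head, bodyPos := r'.bodyPos ∪ r.bodyPos.erase a,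
         bodyNeg := r'.bodyNeg ∪ r.bodyNeg } : Rule α) ∈ P₂ := by
    intro r' h1 h2
    rw [hP₂]
    exact Finset.mem_union_right _ (Finset.mem_image.2 ⟨r', Finset.mem_filter.2 ⟨h1, h2⟩, rfl⟩)
  have hmemP₂ : ∀ s ∈ P₂, (s ∈ P₁ ∧ s ≠ r) ∨ ∃ r' ∈ P₁, r'.head = a ∧
      s = { head := r.head, bodyPos := r'.bodyPos ∪ r.bodyPos.erase a,
            bodyNeg := r'.bodyNeg ∪ r.bodyNeg } := by
    intro s hs
    rw [hP₂] at hs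
    rcases Finset.mem_union.1 hs with hs | hs
    · exact Or.inl ⟨Finset.mem_of_mem_erase hs, Finset.ne_of_mem_erase hs⟩
    · obtain ⟨r', hr', rfl⟩ := Finset.mem_image.1 hs
      obtain ⟨h1, h2⟩ := Finset.mem_filter.1 hr'
      exact Or.inr ⟨r', h1, h2, rfl⟩
  have herase : ∀ s ∈ P₁, s ≠ r → s ∈ P₂ := by
    intro s h1 h2; rw [hP₂]; exact Finset.mem_union_left _ (Finset.mem_erase.2 ⟨h2, h1⟩)
  have haH : a ∈ H := hH (bodyPos_mem_HB hr ha)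
  -- A : the operator of P₂ preserves the least fixed point of P₁
  have hA : TOp H (reduct P₂ I) (UT H (reduct P₁ I)) ⊆ UT H (reduct P₁ I) := by
    rintro c ⟨hcH, q, ⟨s, hs, hsurv, hqh, hqb, hqu⟩, hqhead, hnu, hbody⟩
    rcases hmemP₂ s hs with ⟨hs1, -⟩ | ⟨r'', hr'', hhead'', rfl⟩
    · exact UT_closed ⟨hcH, q, ⟨s, hs1, hsurv, hqh, hqb, hqu⟩, hqhead, hnu, hbody⟩
    · simp only at hqh hqb hqu hsurv
      have hsurv'' : ∀ b ∈ r''.bodyNeg, b ∉ I.T := fun b hb =>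
        hsurv b (Finset.mem_union_left _ hb)
      have hsurvr : ∀ b ∈ r.bodyNeg, b ∉ I.T := fun b hb =>
        hsurv b (Finset.mem_union_right _ hb)
      have hnu'' : ¬ ∃ b ∈ r''.bodyNeg, b ∉ I.F := fun ⟨b, hb, hf⟩ =>
        hnu (hqu.2 ⟨b, Finset.mem_union_left _ hb, hf⟩)
      have hnur : ¬ ∃ b ∈ r.bodyNeg, b ∉ I.F := fun ⟨b, hb, hf⟩ =>
        hnu (hqu.2 ⟨b, Finset.mem_union_right _ hb, hf⟩)
      have hbody' : ∀ x ∈ r''.bodyPos ∪ r.bodyPos.erase a, x ∈ UT H (reduct P₁ I) :=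
        fun x hx => hbody x (by rw [hqb]; exact hx)
      have haUT : a ∈ UT H (reduct P₁ I) := by
        refine UT_closed ⟨hhead'' ▸ hH (head_mem_HB hr''), _, mem_reduct_of hr'' hsurv'',
          hhead'', hnu'', ?_⟩
        exact fun x hx => hbody' x (Finset.mem_union_left _ hx)
      refine UT_closed ⟨hcH, _, mem_reduct_of hr hsurvr, ?_, hnur, ?_⟩
      · show r.head = c
        rw [← hqhead, hqh]
      · intro x hx
        by_cases hxa : x = a
        · rwa [hxa]
        · exact hbody' x (Finset.mem_union_right _ (Finset.mem_erase.2 ⟨hxa, hx⟩))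
  -- B : the operator of P₁ preserves the least fixed point of P₂
  have hB : TOp H (reduct P₁ I) (UT H (reduct P₂ I)) ⊆ UT H (reduct P₂ I) := by
    rintro c ⟨hcH, q, ⟨s, hs, hsurv, hqh, hqb, hqu⟩, hqhead, hnu, hbody⟩
    by_cases hsr : s = r
    · subst hsr
      have haU : a ∈ UT H (reduct P₂ I) := hbody a (by rw [hqb]; exact ha)
      obtain ⟨n, hn⟩ := mem_UT.1 haU
      cases n with
      | zero => exact hn.elim
      | succ m =>
        obtain ⟨haH', q'', ⟨s'', hs'', hsurv'', hqh'', hqb'', hqu''⟩, hq''head, hnu'', hbody''⟩ := hn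
        have hs''head : s''.head = a := by rw [← hqh'', hq''head]
        rcases hmemP₂ s'' hs'' with ⟨hs''P₁, -⟩ | ⟨r₂, hr₂, hr₂head, heq⟩
        · have hmem := hresmem s'' hs''P₁ hs''head
          have hsurvres : ∀ b ∈ s''.bodyNeg ∪ s.bodyNeg, b ∉ I.T := by
            intro b hb
            rcases Finset.mem_union.1 hb with hb | hb
            · exact hsurv'' b hb
            · exact hsurv b hb
          have hmemred := mem_reduct_of (I := I) hmem hsurvres
          refine UT_closed ⟨hcH, _, hmemred, ?_, ?_, ?_⟩
          · show s.head = c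
            rw [← hqhead, hqh]
          · rintro ⟨b, hb, hbF⟩
            rcases Finset.mem_union.1 hb with hb | hb
            · exact hnu'' (hqu''.2 ⟨b, hb, hbF⟩)
            · exact hnu (hqu.2 ⟨b, hb, hbF⟩)
          · intro x hx
            rcases Finset.mem_union.1 hx with hx | hx
            · exact mem_UT.2 ⟨m, hbody'' x (by rw [hqb'']; exact hx)⟩
            · exact hbody x (by rw [hqb]; exact Finset.mem_of_mem_erase hx)
        · have hs''rh : s''.head = s.head := by rw [heq]
          have hca : c = a := by rw [← hqhead, hqh, ← hs''rh, hs''head]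
          rw [hca]; exact haU
    · exact UT_closed ⟨hcH, q, ⟨s, herase s hs hsr, hsurv, hqh, hqb, hqu⟩, hqhead, hnu, hbody⟩
  -- C
  have hC : UF H (reduct P₁ I) ⊆ Fop H (reduct P₂ I) (UF H (reduct P₁ I)) := by
    intro c hc
    have hc1 := UF_post hc
    refine ⟨hc1.1, ?_⟩
    rintro q ⟨s, hs, hsurv, hqh, hqb, hqu⟩ hqhead
    rcases hmemP₂ s hs with ⟨hsP₁, -⟩ | ⟨r'', hr'', hr''head, rfl⟩
    · exact hc1.2 q ⟨s, hsP₁, hsurv, hqh, hqb, hqu⟩ hqhead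
    · simp only at hqh hqb hsurv
      have hsurvr : ∀ b ∈ r.bodyNeg, b ∉ I.T := fun b hb =>
        hsurv b (Finset.mem_union_right _ hb)
      have hsurv'' : ∀ b ∈ r''.bodyNeg, b ∉ I.T := fun b hb =>
        hsurv b (Finset.mem_union_left _ hb)
      obtain ⟨a₀, ha₀, ha₀UF⟩ := hc1.2 _ (mem_reduct_of hr hsurvr)
        (by show r.head = c; rw [← hqhead, hqh])
      by_cases h0 : a₀ = a
      · have haUF : a ∈ UF H (reduct P₁ I) := h0 ▸ ha₀UF
        have ha2 := UF_post haUF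
        obtain ⟨a₁, ha₁, ha₁UF⟩ := ha2.2 _ (mem_reduct_of hr'' hsurv'') hr''head
        exact ⟨a₁, by rw [hqb]; exact Finset.mem_union_left _ ha₁, ha₁UF⟩
      · exact ⟨a₀, by rw [hqb]; exact Finset.mem_union_right _ (Finset.mem_erase.2 ⟨h0, ha₀⟩),
          ha₀UF⟩
  -- D
  have hD : UF H (reduct P₂ I) ⊆ Fop H (reduct P₁ I) (UF H (reduct P₂ I)) := by
    intro c hc
    have hc2 := UF_post hc
    refine ⟨hc2.1, ?_⟩
    rintro q ⟨s, hs, hsurv, hqh, hqb, hqu⟩ hqhead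
    by_cases hsr : s = r
    · subst hsr
      by_cases haUF : a ∈ UF H (reduct P₂ I)
      · exact ⟨a, by rw [hqb]; exact ha, haUF⟩
      · have hnot : ¬ (a ∈ H ∧ ∀ q' ∈ reduct P₂ I, q'.head = a →
            ∃ x ∈ q'.bodyPos, x ∈ UF H (reduct P₂ I)) :=
          fun hmem => haUF (UF_pre hmem)
        push_neg at hnot
        obtain ⟨q', hq', hq'head, hq'body⟩ := hnot haH
        obtain ⟨s', hs', hsurv', hq'h, hq'b, hq'u⟩ := hq'
        have hs'head : s'.head = a := by rw [← hq'h, hq'head]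
        rcases hmemP₂ s' hs' with ⟨hs'P₁, -⟩ | ⟨r₂, hr₂, hr₂head, heq⟩
        · have hmem := hresmem s' hs'P₁ hs'head
          have hsurvres : ∀ b ∈ s'.bodyNeg ∪ s.bodyNeg, b ∉ I.T := by
            intro b hb
            rcases Finset.mem_union.1 hb with hb | hb
            · exact hsurv' b hb
            · exact hsurv b hb
          have hmemred := mem_reduct_of (I := I) hmem hsurvres
          have hchead : s.head = c := by rw [← hqhead, hqh]
          obtain ⟨x, hx, hxUF⟩ := hc2.2 _ hmemred hchead
          rcases Finset.mem_union.1 hx with hx | hx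
          · exact absurd hxUF (hq'body x (by rw [hq'b]; exact hx))
          · exact ⟨x, by rw [hqb]; exact Finset.mem_of_mem_erase hx, hxUF⟩
        · have hs'rh : s'.head = s.head := by rw [heq]
          have hq'headc : q'.head = c := by rw [hq'h, hs'rh, ← hqh, hqhead]
          obtain ⟨x, hx, hxUF⟩ := hc2.2 q' ⟨s', hs', hsurv', hq'h, hq'b, hq'u⟩ hq'headc
          exact absurd hxUF (hq'body x hx)
    · exact hc2.2 q ⟨s, herase s hs hsr, hsurv, hqh, hqb, hqu⟩ hqhead
  rw [OmegaOp_eq, OmegaOp_eq, UT_eq_of hA hB, UF_eq_of hC hD]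

end Aux4
section Aux5
set_option linter.unusedSectionVars false
set_option maxHeartbeats 1000000

variable {α : Type} [DecidableEq α]

lemma step_HB {P₁ P₂ : NLP α} (h : StepUTPM P₁ P₂) : HB P₂ ⊆ HB P₁ := by
  classical
  rcases h with h | h | h | h
  · obtain ⟨r, hr, a, ha, hP₂⟩ := h
    intro x hx
    obtain ⟨s, hs, hxs⟩ := mem_HB.1 hx
    rw [hP₂] at hs
    rcases Finset.mem_union.1 hs with hs | hs
    · exact mem_HB.2 ⟨s, Finset.mem_of_mem_erase hs, hxs⟩
    · obtain ⟨r', hr', rfl⟩ := Finset.mem_image.1 hs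
      obtain ⟨hr'P, -⟩ := Finset.mem_filter.1 hr'
      rw [Rule.atoms, Finset.mem_insert, Finset.mem_union, Finset.mem_union,
        Finset.mem_union] at hxs
      rcases hxs with rfl | (hx1 | hx1) | (hx1 | hx1)
      · exact head_mem_HB (s := r) hr
      · exact bodyPos_mem_HB hr'P hx1
      · exact bodyPos_mem_HB hr (Finset.mem_of_mem_erase hx1)
      · exact bodyNeg_mem_HB hr'P hx1
      · exact bodyNeg_mem_HB hr hx1
  · obtain ⟨r, hr, -, hP₂⟩ := h
    exact HB_mono (hP₂ ▸ Finset.erase_subset _ _)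
  · obtain ⟨r, hr, b, hb, -, hP₂⟩ := h
    intro x hx
    obtain ⟨s, hs, hxs⟩ := mem_HB.1 hx
    rw [hP₂] at hs
    rcases Finset.mem_insert.1 hs with rfl | hs
    · rw [Rule.atoms, Finset.mem_insert, Finset.mem_union] at hxs
      rcases hxs with rfl | hx1 | hx1
      · exact head_mem_HB (s := r) hr
      · exact bodyPos_mem_HB hr hx1
      · exact bodyNeg_mem_HB hr (Finset.mem_of_mem_erase hx1)
    · exact mem_HB.2 ⟨s, Finset.mem_of_mem_erase hs, hxs⟩
  · obtain ⟨r, hr, r', hr', -, -, -, -, hP₂⟩ := h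
    exact HB_mono (hP₂ ▸ Finset.erase_subset _ _)

lemma step_psmodel {P₁ P₂ : NLP α} {H : Finset α} (h : StepUTPM P₁ P₂)
    (hH : HB P₁ ⊆ H) (I : Interp α) : IsPSModel H P₁ I ↔ IsPSModel H P₂ I := by
  unfold IsPSModel
  rcases h with h | h | h | h
  · rw [stepU_omega h hH I]
  · rw [stepT_omega h H I]
  · exact and_congr_right fun hI => stepP_iff h hH hI
  · rw [stepM_omega h H I]

lemma chain_psmodel {P P' : NLP α} (h : Relation.ReflTransGen StepUTPM P P') :
    HB P' ⊆ HB P ∧ ∀ J, IsPSModel (HB P) P J ↔ IsPSModel (HB P) P' J := by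
  induction h with
  | refl => exact ⟨subset_rfl, fun J => Iff.rfl⟩
  | tail hsteps hstep ih =>
      exact ⟨(step_HB hstep).trans ih.1,
        fun J => (ih.2 J).trans (step_psmodel hstep ih.1 J)⟩

end Aux5
theorem stmt17 (P Pstar : NLP α) (h : Relation.ReflTransGen StepUTPM P Pstar)
    (hirr : UTPMIrreducible Pstar) (M : Interp α) (hM : IsInterp (HB P) M) :
    (IsPSModel (HB P) P M ↔ IsPSModel (HB P) Pstar M) ∧
    (IsWFModel (HB P) P M ↔ IsWFModel (HB P) Pstar M) ∧
    (IsRegularModel (HB P) P M ↔ IsRegularModel (HB P) Pstar M) ∧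
    (IsStableModel (HB P) P M ↔ IsStableModel (HB P) Pstar M) ∧
    (IsLStableModel (HB P) P M ↔ IsLStableModel (HB P) Pstar M) := by
  have hiff : ∀ J, IsPSModel (HB P) P J ↔ IsPSModel (HB P) Pstar J := (chain_psmodel h).2
  refine ⟨hiff M, ?_, ?_, ?_, ?_⟩
  · exact ⟨fun hw => ⟨(hiff M).1 hw.1, fun J hJ => hw.2 J ((hiff J).2 hJ)⟩,
      fun hw => ⟨(hiff M).2 hw.1, fun J hJ => hw.2 J ((hiff J).1 hJ)⟩⟩
  · exact ⟨fun hw => ⟨(hiff M).1 hw.1, fun J hJ => hw.2 J ((hiff J).2 hJ)⟩,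
      fun hw => ⟨(hiff M).2 hw.1, fun J hJ => hw.2 J ((hiff J).1 hJ)⟩⟩
  · exact ⟨fun hw => ⟨(hiff M).1 hw.1, hw.2⟩, fun hw => ⟨(hiff M).2 hw.1, hw.2⟩⟩
  · exact ⟨fun hw => ⟨(hiff M).1 hw.1, fun J hJ => hw.2 J ((hiff J).2 hJ)⟩,
      fun hw => ⟨(hiff M).2 hw.1, fun J hJ => hw.2 J ((hiff J).1 hJ)⟩⟩
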